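/- arXiv:2405.07271 — 2 statements merged into one kernel-verified Lean document; each statement's English description precedes it below -/
import Mathlib

section
/- If R is an S-coherent ring and x = (x₁,…,xₙ) ∈ Rⁿ, then the annihilator (0 :_R x) = ⋂ᵢ (0 :_R xᵢ) is an S-finite ideal of R. -/
open Function LinearMap

/-- A module `M` is `S`-finite: there is a f.g. submodule `N₀` and `s ∈ S` with `s • M ⊆ N₀`. -/
def SFiniteMod (R : Type*) [CommRing R] (S : Submonoid R)
    (M : Type*) [AddCommGroup M] [Module R M] : Prop :=
  ∃ N₀ : Submodule R M, N₀.FG ∧ ∃ s ∈ S, ∀ m : M, s • m ∈ N₀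

/-- A module `M` is `S`-finitely presented: there is an exact sequence
`0 → K → F → M → 0` with `F` finitely generated free and `K` `S`-finite. -/
def SFinitePres (R : Type*) [CommRing R] (S : Submonoid R)
    (M : Type*) [AddCommGroup M] [Module R M] : Prop :=
  ∃ (n : ℕ) (f : (Fin n → R) →ₗ[R] M), Function.Surjective f ∧
    ∃ K₀ : Submodule R (Fin n → R), K₀.FG ∧ K₀ ≤ LinearMap.ker f ∧
      ∃ s ∈ S, ∀ x ∈ LinearMap.ker f, s • x ∈ K₀

/-- An ideal `I` is `S`-finite. -/
def SFiniteIdeal (R : Type*) [CommRing R] (S : Submonoid R) (I : Ideal R) : Prop :=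
  ∃ J : Ideal R, J.FG ∧ J ≤ I ∧ ∃ s ∈ S, ∀ x ∈ I, s * x ∈ J

/-- `R` is an `S`-coherent ring: every finitely generated ideal is `S`-finitely presented. -/
def SCoherentRing (R : Type*) [CommRing R] (S : Submonoid R) : Prop :=
  ∀ I : Ideal R, I.FG → SFinitePres R S ↥I

/-- `M` is an `S`-coherent module: finitely generated and every finitely generated
submodule is `S`-finitely presented. -/
def SCoherentMod (R : Type*) [CommRing R] (S : Submonoid R)
    (M : Type*) [AddCommGroup M] [Module R M] : Prop :=
  Module.Finite R M ∧ ∀ N : Submodule R M, N.FG → SFinitePres R S ↥N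

/-! Schanuel's lemma, up to multiplication by an element of `S`, shows that in an `S`-coherent
ring the syzygies of a finite family `b` form an `S`-finite module. Mapping the syzygies of
`a • b` back along `b` shows that `J ∩ (0 : a)` is `S`-finite for every finitely generated
ideal `J`. The annihilator `(0 : x) = ⋂ᵢ (0 : xᵢ)` is then handled one coordinate at a time:
if `t • N ⊆ N₀` with `N₀ ⊆ N` finitely generated, then `N ∩ P` is `S`-finite as soon as
`N₀ ∩ P` is. -/

namespace Submodule

variable {R M : Type*} [CommRing R] [AddCommGroup M] [Module R M] (S : Submonoid R)

/-- The submodule version of `SFiniteIdeal`, to which it unfolds for ideals. -/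
def IsSFinite (N : Submodule R M) : Prop :=
  ∃ N₀ : Submodule R M, N₀.FG ∧ N₀ ≤ N ∧ ∃ s ∈ S, ∀ y ∈ N, s • y ∈ N₀

variable {S}

theorem FG.isSFinite {N : Submodule R M} (hN : N.FG) : N.IsSFinite S :=
  ⟨N, hN, le_rfl, 1, S.one_mem, fun y hy => by rwa [one_smul]⟩

theorem IsSFinite.sup {N₁ N₂ : Submodule R M} (h₁ : N₁.IsSFinite S) (h₂ : N₂.IsSFinite S) :
    (N₁ ⊔ N₂).IsSFinite S := by
  obtain ⟨K₁, hK₁, hK₁N, s₁, hs₁, hN₁⟩ := h₁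
  obtain ⟨K₂, hK₂, hK₂N, s₂, hs₂, hN₂⟩ := h₂
  refine ⟨K₁ ⊔ K₂, hK₁.sup hK₂, sup_le_sup hK₁N hK₂N, s₁ * s₂, S.mul_mem hs₁ hs₂, ?_⟩
  intro y hy
  obtain ⟨y₁, hy₁, y₂, hy₂, rfl⟩ := mem_sup.mp hy
  have hy₁' : (s₁ * s₂) • y₁ ∈ K₁ := by
    rw [mul_comm, mul_smul]; exact smul_mem _ _ (hN₁ y₁ hy₁)
  have hy₂' : (s₁ * s₂) • y₂ ∈ K₂ := by
    rw [mul_smul]; exact smul_mem _ _ (hN₂ y₂ hy₂)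
  rw [smul_add]
  exact add_mem (mem_sup_left hy₁') (mem_sup_right hy₂')

theorem IsSFinite.map {M' : Type*} [AddCommGroup M'] [Module R M'] {N : Submodule R M}
    (hN : N.IsSFinite S) (f : M →ₗ[R] M') : (N.map f).IsSFinite S := by
  obtain ⟨N₀, hN₀, hN₀N, s, hs, hsN⟩ := hN
  refine ⟨N₀.map f, hN₀.map f, map_mono hN₀N, s, hs, ?_⟩
  rintro _ ⟨y, hy, rfl⟩
  rw [← map_smul]
  exact mem_map_of_mem (hsN y hy)

theorem IsSFinite.inf {N : Submodule R M} (hN : N.IsSFinite S) (P : Submodule R M)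
    (hP : ∀ N₀ : Submodule R M, N₀.FG → N₀ ≤ N → (N₀ ⊓ P).IsSFinite S) :
    (N ⊓ P).IsSFinite S := by
  obtain ⟨N₀, hN₀, hN₀N, t, ht, htN⟩ := hN
  obtain ⟨C, hC, hCle, u, hu, huC⟩ := hP N₀ hN₀ hN₀N
  refine ⟨C, hC, hCle.trans (inf_le_inf_right P hN₀N), u * t, S.mul_mem hu ht, ?_⟩
  intro y hy
  rw [mul_smul]
  exact huC _ ⟨htN y hy.1, P.smul_mem t hy.2⟩

theorem isSFinite_finset_inf [Module.Finite R M] {ι : Type*} (P : ι → Submodule R M)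
    (hP : ∀ i, ∀ N : Submodule R M, N.FG → (N ⊓ P i).IsSFinite S) (s : Finset ι) :
    (s.inf P).IsSFinite S := by
  classical
  induction s using Finset.induction_on with
  | empty => exact Module.Finite.fg_top.isSFinite
  | insert i s _ ih =>
    rw [Finset.inf_insert, inf_comm]
    exact ih.inf (P i) fun N₀ hN₀ _ => hP i N₀ hN₀

end Submodule

section

open Submodule

variable {R : Type*} [CommRing R] {S : Submonoid R}

/-- Schanuel's lemma up to `S`: if `f : Rᵐ → M` is the given presentation and `φ`, `ψ` lift
`g`, `f` through each other, then `ker g = ψ (ker f) + range (ψ ∘ φ - id)`. -/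
theorem SFinitePres.isSFinite_ker {M F : Type*} [AddCommGroup M] [Module R M] [AddCommGroup F]
    [Module R F] [Module.Projective R F] [Module.Finite R F] (hM : SFinitePres R S M)
    (g : F →ₗ[R] M) (hg : Surjective g) : (ker g).IsSFinite S := by
  obtain ⟨m, f, hf, hkerf : (ker f).IsSFinite S⟩ := hM
  obtain ⟨φ, hφ⟩ := Module.projective_lifting_property f g hf
  obtain ⟨ψ, hψ⟩ := Module.projective_lifting_property g f hg
  set θ : F →ₗ[R] F := ψ ∘ₗ φ - LinearMap.id
  have hθ : range θ ≤ ker g := range_le_ker_iff.mpr <| by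
    rw [comp_sub, ← LinearMap.comp_assoc, hψ, hφ, LinearMap.comp_id, sub_self]
  have hker : ker g = (ker f).map ψ ⊔ range θ := by
    refine le_antisymm (fun y hy => ?_) (sup_le ?_ hθ)
    · have hφy : φ y ∈ ker f := by rwa [mem_ker, ← LinearMap.comp_apply, hφ]
      have hy_eq : y = ψ (φ y) - θ y := by simp [θ]
      rw [hy_eq]
      exact sub_mem (mem_sup_left (mem_map_of_mem hφy)) (mem_sup_right (mem_range_self θ y))
    · rintro _ ⟨z, hz, rfl⟩
      rwa [mem_ker, ← LinearMap.comp_apply, hψ]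
  rw [hker]
  exact (hkerf.map ψ).sup (fg_range θ).isSFinite

namespace SCoherentRing

theorem isSFinite_ker_linearCombination (h : SCoherentRing R S) {ι : Type*} [Fintype ι]
    (b : ι → R) : (ker (Fintype.linearCombination R b)).IsSFinite S := by
  set β := Fintype.linearCombination R b
  rw [← ker_rangeRestrict]
  exact (h _ (fg_range β)).isSFinite_ker _ β.surjective_rangeRestrict

theorem isSFinite_inf_ker_toSpanSingleton (h : SCoherentRing R S) {J : Ideal R} (hJ : J.FG)
    (a : R) : (J ⊓ ker (toSpanSingleton R R a)).IsSFinite S := by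
  obtain ⟨k, b, rfl⟩ := fg_iff_exists_fin_generating_family.mp hJ
  have hcomp : Fintype.linearCombination R (a • b) =
      toSpanSingleton R R a ∘ₗ Fintype.linearCombination R b := by
    ext i
    simp [mul_comm]
  rw [← Fintype.range_linearCombination, ← map_comap_eq, ← ker_comp, ← hcomp]
  exact (h.isSFinite_ker_linearCombination _).map _

end SCoherentRing

end

/-- In an S-coherent ring, the annihilator of an element `x ∈ Rⁿ`, which equals
`⋂ i, (0 :_R x i)`, is an S-finite ideal. -/
theorem stmt6 {R : Type*} [CommRing R] (S : Submonoid R)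
    (h : SCoherentRing R S) (n : ℕ) (x : Fin n → R) :
    LinearMap.ker (LinearMap.toSpanSingleton R (Fin n → R) x) =
      (⨅ i, LinearMap.ker (LinearMap.toSpanSingleton R R (x i))) ∧
    SFiniteIdeal R S (LinearMap.ker (LinearMap.toSpanSingleton R (Fin n → R) x)) := by
  have hker : ker (toSpanSingleton R (Fin n → R) x) = ⨅ i, ker (toSpanSingleton R R (x i)) := by
    ext r
    simp only [mem_ker, toSpanSingleton_apply, Submodule.mem_iInf, funext_iff, Pi.smul_apply,
      Pi.zero_apply]
  refine ⟨hker, ?_⟩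
  rw [hker, ← Finset.inf_univ_eq_iInf]
  exact Submodule.isSFinite_finset_inf _
    (fun i _ hN => h.isSFinite_inf_ker_toSpanSingleton hN (x i)) _
end

section
/- If R is an S-coherent ring, then every cyclic submodule of a finitely generated free R-module Rⁿ is S-finitely presented. -/
open Function LinearMap

/-!
The annihilator of `x = (x₁, …, xₙ)` is `⋂ ann(xᵢ)`, and `R ∙ x ≅ R / ann(x)`, so it suffices to
see that intersecting an `S`-finite ideal `J` (with `J₀ ⊆ J` finitely generated, `s • J ⊆ J₀`)
with `ann(c)` keeps it `S`-finite. Now `J₀ ∩ ann(c)` is the kernel of multiplication by `c` from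
`J₀` onto the finitely generated ideal `c J₀`, which is `S`-finitely presented by coherence, and
by an `S`-version of Schanuel's lemma such a kernel is `S`-finite.
-/

namespace Submodule

variable {R M : Type*} [CommRing R] [AddCommGroup M] [Module R M]

/-- Shaped so that `SFinitePres R S M` unfolds to `∃ n f, Surjective f ∧ (ker f).SFinite S`. -/
def SFinite (S : Submonoid R) (N : Submodule R M) : Prop :=
  ∃ N₀ : Submodule R M, N₀.FG ∧ N₀ ≤ N ∧ ∃ s ∈ S, ∀ x ∈ N, s • x ∈ N₀

theorem FG.sFinite {N : Submodule R M} (hN : N.FG) (S : Submonoid R) : N.SFinite S :=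
  ⟨N, hN, le_rfl, 1, S.one_mem, fun x hx => by rwa [one_smul]⟩

end Submodule

section SFinitePres

variable {R M : Type*} [CommRing R] [AddCommGroup M] [Module R M] {S : Submonoid R}

theorem sFinitePres_of_surjective {F : Type*} [AddCommGroup F] [Module R F] [Module.Free R F]
    [Module.Finite R F] (g : F →ₗ[R] M) (hg : Surjective g) (hker : (ker g).SFinite S) :
    SFinitePres R S M := by
  obtain ⟨K₀, hK₀, hK₀le, s, hs, hsK₀⟩ := hker
  let e := ((Module.Free.chooseBasis R F).reindex (Fintype.equivFin _)).equivFun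
  refine ⟨_, g ∘ₗ e.symm.toLinearMap, hg.comp e.symm.surjective, K₀.map e.toLinearMap,
    hK₀.map _, ?_, s, hs, fun v hv => ?_⟩
  · rintro _ ⟨w, hw, rfl⟩
    simpa using hK₀le hw
  · refine ⟨s • e.symm v, hsK₀ _ hv, ?_⟩
    simp

/-- An `S`-version of Schanuel's lemma: once one presentation of `M` has an `S`-finite kernel,
so has every presentation by a finite projective module. -/
theorem SFinitePres.sFinite_ker {F : Type*} [AddCommGroup F] [Module R F]
    [Module.Projective R F] [Module.Finite R F] (hM : SFinitePres R S M)
    (g : F →ₗ[R] M) (hg : Surjective g) : (ker g).SFinite S := by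
  obtain ⟨m, f, hf, K₀, hK₀, hK₀le, s, hs, hsK₀⟩ := hM
  obtain ⟨h, hh⟩ := Module.projective_lifting_property f g hf
  obtain ⟨j, hj⟩ := Module.projective_lifting_property g f hg
  have hh' (v : F) : f (h v) = g v := LinearMap.congr_fun hh v
  have hj' (w : Fin m → R) : g (j w) = f w := LinearMap.congr_fun hj w
  -- `v = (v - j (h v)) + j (h v)`, and the first summand always lies in `ker g`.
  refine ⟨range (LinearMap.id - j ∘ₗ h) ⊔ K₀.map j, ?_, ?_, s, hs, fun v hv => ?_⟩
  · exact (Submodule.fg_range _).sup (hK₀.map j)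
  · refine sup_le ?_ ?_
    · rintro _ ⟨v, rfl⟩
      simp [hj', hh']
    · rintro _ ⟨w, hw, rfl⟩
      simpa [hj'] using hK₀le hw
  · have hhv : s • h v ∈ K₀ := hsK₀ _ (by simpa [hh'] using hv)
    have hsplit : s • v = (LinearMap.id - j ∘ₗ h : F →ₗ[R] F) (s • v) + j (s • h v) := by
      simp [smul_sub]
    rw [hsplit]
    exact Submodule.add_mem_sup (mem_range_self _ _) (Submodule.mem_map_of_mem hhv)

theorem Submodule.FG.sFinite_inf_ker {P : Type*} [AddCommGroup P] [Module R P]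
    {N : Submodule R M} (hN : N.FG) (φ : M →ₗ[R] P) (hφN : SFinitePres R S (N.map φ)) :
    (N ⊓ ker φ).SFinite S := by
  obtain ⟨k, a, ha⟩ := Submodule.fg_iff_exists_fin_generating_family.mp hN
  let π := Fintype.linearCombination R a
  have hπ : range π = N := by rw [Fintype.range_linearCombination, ha]
  let g : (Fin k → R) →ₗ[R] N.map φ :=
    (φ ∘ₗ π).codRestrict _ fun v => Submodule.mem_map_of_mem (hπ ▸ mem_range_self π v)
  have hg : Surjective g := by
    rintro ⟨_, y, hy, rfl⟩
    obtain ⟨v, rfl⟩ := (hπ ▸ hy : y ∈ range π)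
    exact ⟨v, rfl⟩
  have hkerg (v : Fin k → R) : v ∈ ker g ↔ π v ∈ ker φ := by
    simp [g]
  obtain ⟨L, hL, hLle, t, ht, htL⟩ := hφN.sFinite_ker g hg
  refine ⟨L.map π, hL.map π, ?_, t, ht, ?_⟩
  · rintro _ ⟨v, hv, rfl⟩
    exact ⟨hπ ▸ mem_range_self π v, (hkerg v).mp (hLle hv)⟩
  · rintro _ ⟨hyN, hyφ⟩
    obtain ⟨v, rfl⟩ := (hπ ▸ hyN : _ ∈ range π)
    exact ⟨t • v, htL v ((hkerg v).mpr hyφ), map_smul π t v⟩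

end SFinitePres

section SCoherentRing

variable {R : Type*} [CommRing R] {S : Submonoid R}

theorem SCoherentRing.sFinite_inf_ker_toSpanSingleton (hR : SCoherentRing R S)
    {J : Ideal R} (hJ : J.SFinite S) (c : R) :
    (J ⊓ ker (toSpanSingleton R R c)).SFinite S := by
  obtain ⟨J₀, hJ₀, hJ₀le, s, hs, hsJ₀⟩ := hJ
  obtain ⟨L, hL, hLle, t, ht, htL⟩ :=
    hJ₀.sFinite_inf_ker (toSpanSingleton R R c) (hR _ (hJ₀.map _))
  refine ⟨L, hL, hLle.trans (inf_le_inf_right _ hJ₀le), t * s, S.mul_mem ht hs, ?_⟩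
  rintro r ⟨hrJ, hrc⟩
  rw [mul_smul]
  exact htL _ ⟨hsJ₀ r hrJ, Submodule.smul_mem _ s hrc⟩

theorem SCoherentRing.sFinite_ker_toSpanSingleton_pi (hR : SCoherentRing R S)
    {ι : Type*} [Fintype ι] (x : ι → R) : (ker (toSpanSingleton R (ι → R) x)).SFinite S := by
  classical
  have hann : ker (toSpanSingleton R (ι → R) x) =
      Finset.univ.inf fun i => ker (toSpanSingleton R R (x i)) := by
    ext r
    simp [funext_iff]
  rw [hann]
  induction (Finset.univ : Finset ι) using Finset.induction_on with
  | empty => exact Module.Finite.fg_top.sFinite S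
  | insert i s _ hs =>
    rw [Finset.inf_insert, inf_comm]
    exact hR.sFinite_inf_ker_toSpanSingleton hs (x i)

end SCoherentRing

theorem sFinitePres_span_singleton {R M : Type*} [CommRing R] [AddCommGroup M] [Module R M]
    {S : Submonoid R} {x : M} (hx : (ker (toSpanSingleton R M x)).SFinite S) :
    SFinitePres R S (Submodule.span R {x}) := by
  rw [span_singleton_eq_range]
  exact sFinitePres_of_surjective _ (toSpanSingleton R M x).surjective_rangeRestrict
    ((toSpanSingleton R M x).ker_rangeRestrict ▸ hx)

/-- In an S-coherent ring, every cyclic submodule of a finitely generated free module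
`Rⁿ` is S-finitely presented. -/
theorem stmt7 {R : Type*} [CommRing R] (S : Submonoid R)
    (h : SCoherentRing R S) (n : ℕ) (x : Fin n → R) :
    SFinitePres R S ↥(Submodule.span R {x}) :=
  sFinitePres_span_singleton (h.sFinite_ker_toSpanSingleton_pi x)
end
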